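/- arXiv:1803.03383 — 3 statements merged into one kernel-verified Lean document; each statement's English description precedes it below -/
import Mathlib

section
/- Let (δ, b) be a low-precision representation and let w* ∈ ℝ^d be a vector with every component in the representable range, i.e., −δ·2^(b−1) ≤ (w*)_j ≤ δ·(2^(b−1)−1) for all j. Then for any w ∈ ℝ^d, the stochastic rounding quantizer satisfies E[‖Q_{(δ,b)}(w) − w*‖²] ≤ ‖w − w*‖² + dδ²/4, where the components of w are quantized independently. -/
open MeasureTheory

/-!
The squared norm is a sum over coordinates and coordinate `j` of the quantized vector depends
only on the uniform variable `u j`, so by linearity it suffices to bound one coordinate.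
Inside the representable range, stochastic rounding of `x` between grid points `z ≤ x < z + δ`
is unbiased, so its mean square distance to `y` is `(x - y)²` plus the variance
`(x - z)(z + δ - x) ≤ δ² / 4`. Outside the range, clamping to the nearest representable value
only moves `x` closer to `y`, which lies in the range.
-/

/-- The uniform distribution on `[0,1]`, used as the source of randomness for one
stochastic-rounding coin. -/
noncomputable def unif01 : Measure ℝ := volume.restrict (Set.Icc (0 : ℝ) 1)

/-- Scalar stochastic-rounding quantizer for the low-precision representation `(δ, b)`,
driven by a uniform random number `u ∈ [0,1]`.  Values outside the representable range
`[−δ·2^(b−1), δ·(2^(b−1)−1)]` are deterministically mapped to the nearest representable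
value; a value `x` inside the range is rounded up to the next grid point `z + δ`
(where `z = δ⌊x/δ⌋` is the largest grid point `≤ x`) when `u < (x − z)/δ`, i.e. with
probability `(x − z)/δ`, and rounded down to `z` otherwise. -/
noncomputable def sround (δ : ℝ) (b : ℕ) (x u : ℝ) : ℝ :=
  if x < -δ * 2 ^ (b - 1) then -δ * 2 ^ (b - 1)
  else if δ * (2 ^ (b - 1) - 1) < x then δ * (2 ^ (b - 1) - 1)
  else if u < (x - δ * (⌊x / δ⌋ : ℝ)) / δ then δ * ((⌊x / δ⌋ : ℝ) + 1)
  else δ * (⌊x / δ⌋ : ℝ)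

/-- Componentwise stochastic rounding of a vector in `ℝ^d`, using an independent uniform
random number `u j` for each coordinate `j`. -/
noncomputable def svround {d : ℕ} (δ : ℝ) (b : ℕ)
    (x : EuclideanSpace ℝ (Fin d)) (u : Fin d → ℝ) : EuclideanSpace ℝ (Fin d) :=
  WithLp.toLp 2 (fun j => sround δ b (x j) (u j))

instance : IsProbabilityMeasure unif01 := ⟨by simp [unif01, Real.volume_Icc]⟩

lemma unif01_real_Iio {p : ℝ} (hp0 : 0 ≤ p) (hp1 : p ≤ 1) : unif01.real (Set.Iio p) = p := by
  have hIco : Set.Iio p ∩ Set.Icc 0 1 = Set.Ico 0 p := by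
    ext u
    simp only [Set.mem_inter_iff, Set.mem_Iio, Set.mem_Icc, Set.mem_Ico]
    grind
  rw [unif01, measureReal_restrict_apply measurableSet_Iio, hIco, Real.volume_real_Ico_of_le hp0,
    sub_zero]

lemma integrable_ite_lt (p A B : ℝ) : Integrable (fun u => if u < p then A else B) unif01 :=
  Integrable.piecewise (s := Set.Iio p) measurableSet_Iio (integrable_const A).integrableOn
    (integrable_const B).integrableOn

lemma integral_ite_lt {p : ℝ} (hp0 : 0 ≤ p) (hp1 : p ≤ 1) (A B : ℝ) :
    ∫ u, (if u < p then A else B) ∂unif01 = p * A + (1 - p) * B := by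
  have := integral_piecewise (s := Set.Iio p) (μ := unif01) measurableSet_Iio
    (integrable_const A).integrableOn (integrable_const B).integrableOn
  rw [setIntegral_const, setIntegral_const, probReal_compl_eq_one_sub measurableSet_Iio,
    unif01_real_Iio hp0 hp1, smul_eq_mul, smul_eq_mul] at this
  exact this

lemma mul_floor_div_le {δ : ℝ} (hδ : 0 < δ) (x : ℝ) : δ * ⌊x / δ⌋ ≤ x := by
  calc δ * ⌊x / δ⌋ ≤ δ * (x / δ) := by gcongr; exact Int.floor_le _
    _ = x := mul_div_cancel₀ x hδ.ne'

lemma lt_mul_floor_div_add {δ : ℝ} (hδ : 0 < δ) (x : ℝ) : x < δ * ⌊x / δ⌋ + δ := by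
  calc x = δ * (x / δ) := (mul_div_cancel₀ x hδ.ne').symm
    _ < δ * (⌊x / δ⌋ + 1) := by gcongr; exact Int.lt_floor_add_one _
    _ = δ * ⌊x / δ⌋ + δ := mul_add_one _ _

lemma rounding_mean_sq_le {x y z δ : ℝ} (hδ : δ ≠ 0) :
    (x - z) / δ * (z + δ - y) ^ 2 + (1 - (x - z) / δ) * (z - y) ^ 2 ≤ (x - y) ^ 2 + δ ^ 2 / 4 := by
  have hmean : (x - z) / δ * (z + δ - y) ^ 2 + (1 - (x - z) / δ) * (z - y) ^ 2
      = (x - y) ^ 2 + (x - z) * (z + δ - x) := by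
    field_simp
    ring
  rw [hmean]
  nlinarith [sq_nonneg (δ - 2 * (x - z))]

section StochasticRounding

variable (δ : ℝ) (b : ℕ)

lemma sround_of_mem {x : ℝ} (hlo : -δ * 2 ^ (b - 1) ≤ x) (hhi : x ≤ δ * (2 ^ (b - 1) - 1))
    (u : ℝ) :
    sround δ b x u = if u < (x - δ * ⌊x / δ⌋) / δ then δ * ⌊x / δ⌋ + δ else δ * ⌊x / δ⌋ := by
  rw [sround, if_neg hlo.not_gt, if_neg hhi.not_gt, mul_add_one]

lemma integrable_sround_sub_sq (x y : ℝ) :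
    Integrable (fun u => (sround δ b x u - y) ^ 2) unif01 := by
  unfold sround
  split_ifs
  · exact integrable_const _
  · exact integrable_const _
  · simpa only [ite_sub, ite_pow] using integrable_ite_lt _ _ _

variable {δ}

lemma integral_sround_sub_sq_le (hδ : 0 < δ) {y : ℝ} (hylo : -δ * 2 ^ (b - 1) ≤ y)
    (hyhi : y ≤ δ * (2 ^ (b - 1) - 1)) (x : ℝ) :
    ∫ u, (sround δ b x u - y) ^ 2 ∂unif01 ≤ (x - y) ^ 2 + δ ^ 2 / 4 := by
  by_cases hlo : x < -δ * 2 ^ (b - 1)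
  · simp only [sround, if_pos hlo, integral_const, probReal_univ, one_smul]
    nlinarith
  by_cases hhi : δ * (2 ^ (b - 1) - 1) < x
  · simp only [sround, if_neg hlo, if_pos hhi, integral_const, probReal_univ, one_smul]
    nlinarith
  have hp0 : 0 ≤ (x - δ * ⌊x / δ⌋) / δ := div_nonneg (sub_nonneg.2 (mul_floor_div_le hδ x)) hδ.le
  have hp1 : (x - δ * ⌊x / δ⌋) / δ ≤ 1 :=
    (div_le_one hδ).2 (by linarith [lt_mul_floor_div_add hδ x])
  simp only [sround_of_mem δ b (not_lt.mp hlo) (not_lt.mp hhi), ite_sub, ite_pow]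
  rw [integral_ite_lt hp0 hp1]
  exact rounding_mean_sq_le hδ.ne'

lemma norm_svround_sub_sq {d : ℕ} (x y : EuclideanSpace ℝ (Fin d)) (u : Fin d → ℝ) :
    ‖svround δ b x u - y‖ ^ 2 = ∑ j, (sround δ b (x j) (u j) - y j) ^ 2 := by
  simp [EuclideanSpace.norm_sq_eq, svround]

end StochasticRounding

/-- **Quantization lemma (Lemma 1).**
If every component of `w*` lies in the representable range of `(δ, b)`, then stochastically
rounding any `w ∈ ℝ^d` (componentwise independently) satisfies
`E[‖Q_{(δ,b)}(w) − w*‖²] ≤ ‖w − w*‖² + dδ²/4`. -/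
theorem quantization_lemma {d : ℕ} (δ : ℝ) (b : ℕ) (hδ : 0 < δ)
    (wstar w : EuclideanSpace ℝ (Fin d))
    (hrange : ∀ j, -δ * 2 ^ (b - 1) ≤ wstar j ∧ wstar j ≤ δ * (2 ^ (b - 1) - 1)) :
    ∫ u, ‖svround δ b w u - wstar‖ ^ 2 ∂(Measure.pi fun _ : Fin d => unif01)
      ≤ ‖w - wstar‖ ^ 2 + d * δ ^ 2 / 4 := by
  have hint (j : Fin d) := integrable_sround_sub_sq δ b (w j) (wstar j)
  calc ∫ u, ‖svround δ b w u - wstar‖ ^ 2 ∂(Measure.pi fun _ : Fin d => unif01)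
      = ∑ j, ∫ v, (sround δ b (w j) v - wstar j) ^ 2 ∂unif01 := by
        simp only [norm_svround_sub_sq]
        rw [integral_finsetSum _ fun j _ => integrable_comp_eval (i := j) (hint j)]
        exact Finset.sum_congr rfl fun j _ =>
          integral_comp_eval (μ := fun _ => unif01) (hint j).aestronglyMeasurable
    _ ≤ ∑ j, ((w j - wstar j) ^ 2 + δ ^ 2 / 4) :=
        Finset.sum_le_sum fun j _ =>
          integral_sround_sub_sq_le b hδ (hrange j).1 (hrange j).2 (w j)
    _ = ‖w - wstar‖ ^ 2 + d * δ ^ 2 / 4 := by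
        simp [Finset.sum_add_distrib, EuclideanSpace.norm_sq_eq, mul_div_assoc]
end

section
/- Let δ > 0, let z ≤ w ≤ z + δ and w* be real numbers, and let X be a random variable that takes the value z + δ with probability (w − z)/δ and the value z with probability (z + δ − w)/δ. Then E[(X − w*)²] ≤ (w − w*)² + δ²/4. -/
/-!
The expectation of a two-valued random variable is the corresponding convex combination, and
for weights `p + q = 1` the bias–variance identity
`p (x - c)² + q (y - c)² = (p x + q y - c)² + p q (x - y)²` holds. Stochastic rounding is
unbiased (`p (z + δ) + q z = w`), and its variance `(w - z)(z + δ - w)` is at most `δ²/4` by AM–GM.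
-/

open MeasureTheory

section TwoValued

variable {Ω α : Type*} [MeasurableSpace Ω] [MeasurableSpace α] [MeasurableSingletonClass α]
  {P : Measure Ω} {X : Ω → α} {a b : α}

theorem ae_eq_or_eq_of_measure_add_eq_one [IsProbabilityMeasure P] (hX : Measurable X)
    (hab : a ≠ b) (h : P {ω | X ω = a} + P {ω | X ω = b} = 1) :
    ∀ᵐ ω ∂P, X ω = a ∨ X ω = b := by
  have hdisj : Disjoint {ω | X ω = a} {ω | X ω = b} :=
    Set.disjoint_left.mpr fun ω ha hb => hab (ha.symm.trans hb)
  have hA : MeasurableSet {ω | X ω = a} := hX (measurableSet_singleton a)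
  have hB : MeasurableSet {ω | X ω = b} := hX (measurableSet_singleton b)
  have hAB : {ω | X ω = a ∨ X ω = b} = {ω | X ω = a} ∪ {ω | X ω = b} := rfl
  refine (ae_iff_measure_eq (hAB ▸ (hA.union hB).nullMeasurableSet)).mpr ?_
  rw [measure_univ, hAB, measure_union hdisj hB, h]

theorem integral_comp_of_ae_eq_or_eq [IsFiniteMeasure P] {E : Type*} [NormedAddCommGroup E]
    [NormedSpace ℝ E] [CompleteSpace E] (f : α → E) (hX : Measurable X) (hab : a ≠ b)
    (h : ∀ᵐ ω ∂P, X ω = a ∨ X ω = b) :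
    ∫ ω, f (X ω) ∂P = P.real {ω | X ω = a} • f a + P.real {ω | X ω = b} • f b := by
  have hA : MeasurableSet {ω | X ω = a} := hX (measurableSet_singleton a)
  have hB : MeasurableSet {ω | X ω = b} := hX (measurableSet_singleton b)
  have hsplit : (fun ω => f (X ω)) =ᵐ[P] fun ω =>
      {ω | X ω = a}.indicator (fun _ => f a) ω + {ω | X ω = b}.indicator (fun _ => f b) ω := by
    filter_upwards [h] with ω hω
    rcases hω with hω | hω <;> simp [hω, hab, hab.symm]
  rw [integral_congr_ae hsplit, integral_add ((integrable_const _).indicator hA)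
      ((integrable_const _).indicator hB), integral_indicator_const _ hA,
    integral_indicator_const _ hB]

end TwoValued

theorem weighted_sq_sub_eq {p q : ℝ} (hpq : p + q = 1) (x y c : ℝ) :
    p * (x - c) ^ 2 + q * (y - c) ^ 2 = (p * x + q * y - c) ^ 2 + p * q * (x - y) ^ 2 := by
  obtain rfl : q = 1 - p := by linarith
  ring

theorem stochastic_rounding_sq_sub_le {δ z w : ℝ} (hδ : 0 < δ) (c : ℝ) :
    (w - z) / δ * (z + δ - c) ^ 2 + (z + δ - w) / δ * (z - c) ^ 2 ≤ (w - c) ^ 2 + δ ^ 2 / 4 := by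
  have hsum : (w - z) / δ + (z + δ - w) / δ = 1 := by field_simp; ring
  have hmean : (w - z) / δ * (z + δ) + (z + δ - w) / δ * z = w := by field_simp; ring
  have hvar : (w - z) / δ * ((z + δ - w) / δ) * (z + δ - z) ^ 2 = (w - z) * (z + δ - w) := by
    field_simp; ring
  rw [weighted_sq_sub_eq hsum, hmean, hvar]
  nlinarith [sq_nonneg (w - z - δ / 2)]

/-- **One-dimensional quantization lemma (interior case).**
If `z ≤ w ≤ z + δ` and `X` takes the value `z + δ` with probability `(w - z)/δ` and the
value `z` with probability `(z + δ - w)/δ`, then for any real `w*`,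
`E[(X - w*)²] ≤ (w - w*)² + δ²/4`. -/
theorem stochastic_rounding_distance_bound
    {Ω : Type*} [MeasurableSpace Ω] (P : Measure Ω) [IsProbabilityMeasure P]
    (δ z w wstar : ℝ) (hδ : 0 < δ) (hzw : z ≤ w) (hwz : w ≤ z + δ)
    (X : Ω → ℝ) (hX : Measurable X)
    (hup : P {ω | X ω = z + δ} = ENNReal.ofReal ((w - z) / δ))
    (hdown : P {ω | X ω = z} = ENNReal.ofReal ((z + δ - w) / δ)) :
    ∫ ω, (X ω - wstar) ^ 2 ∂P ≤ (w - wstar) ^ 2 + δ ^ 2 / 4 := by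
  have hp : 0 ≤ (w - z) / δ := div_nonneg (by linarith) hδ.le
  have hq : 0 ≤ (z + δ - w) / δ := div_nonneg (by linarith) hδ.le
  have hne : z + δ ≠ z := by linarith
  have htotal : P {ω | X ω = z + δ} + P {ω | X ω = z} = 1 := by
    rw [hup, hdown, ← ENNReal.ofReal_add hp hq, ← add_div]
    simp [hδ.ne']
  rw [integral_comp_of_ae_eq_or_eq (fun x => (x - wstar) ^ 2) hX hne
      (ae_eq_or_eq_of_measure_add_eq_one hX hne htotal),
    measureReal_def, measureReal_def, hup, hdown, ENNReal.toReal_ofReal hp,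
    ENNReal.toReal_ofReal hq, smul_eq_mul, smul_eq_mul]
  exact stochastic_rounding_sq_sub_le hδ wstar
end

section
/- Let f_1, …, f_N : ℝ^d → ℝ be convex differentiable functions whose gradients are each L-Lipschitz continuous, let f = (1/N)·Σ_{i=1}^N f_i, and let w* be a global minimizer of f. Then for every w ∈ ℝ^d, (1/N)·Σ_{i=1}^N ‖∇f_i(w) − ∇f_i(w*)‖² ≤ 2L·(f(w) − f(w*)). Equivalently, if i is sampled uniformly at random from {1,…,N}, then E[‖∇f_i(w) − ∇f_i(w*)‖²] ≤ 2L·(f(w) − f(w*)). -/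
/-!
For a convex `g` with `L`-Lipschitz gradient, comparing the first-order lower bound at `y`
with the quadratic upper bound (descent lemma) at `x`, both evaluated at the point
`x - L⁻¹ (∇g x - ∇g y)`, gives `‖∇g x - ∇g y‖² ≤ 2L (g x - g y - ⟪∇g y, x - y⟫)`.
Apply this to each `fᵢ` with `x = w`, `y = w*` and average: the linear terms average to
`⟪∇f w*, w - w*⟫`, which vanishes because `w*` minimizes `f`.
-/

open scoped RealInnerProductSpace
open Set

theorem le_add_deriv_add_half_of_deriv_le {φ φ' : ℝ → ℝ} {M : ℝ}
    (hφ : ∀ t, HasDerivAt φ (φ' t) t) (hφ' : ∀ t ∈ Ico (0 : ℝ) 1, φ' t ≤ φ' 0 + M * t) :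
    φ 1 ≤ φ 0 + φ' 0 + M / 2 := by
  have hB : ∀ t, HasDerivAt (fun t => φ 0 + φ' 0 * t + M / 2 * t ^ 2) (φ' 0 + M * t) t := by
    intro t
    refine ((((hasDerivAt_id t).const_mul (φ' 0)).const_add (φ 0)).add
      ((hasDerivAt_pow 2 t).const_mul (M / 2))).congr_deriv ?_
    norm_num; ring
  have := image_le_of_deriv_right_le_deriv_boundary
    (fun t _ => (hφ t).continuousAt.continuousWithinAt) (fun t _ => (hφ t).hasDerivWithinAt)
    (by simp) (fun t _ => (hB t).continuousAt.continuousWithinAt)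
    (fun t _ => (hB t).hasDerivWithinAt) hφ' (right_mem_Icc.2 zero_le_one)
  simpa using this

section InnerProductSpace

variable {E : Type*} [NormedAddCommGroup E] [InnerProductSpace ℝ E] [CompleteSpace E]
  {g : E → ℝ} {L : ℝ}

theorem HasGradientAt.hasDerivAt_comp_add_smul {g' x v : E} {t : ℝ}
    (h : HasGradientAt g g' (x + t • v)) :
    HasDerivAt (fun s : ℝ => g (x + s • v)) ⟪g', v⟫ t := by
  have hline : HasDerivAt (fun s : ℝ => x + s • v) v t := by
    simpa using ((hasDerivAt_id t).smul_const v).const_add x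
  simpa [Function.comp_def] using
    (hasGradientAt_iff_hasFDerivAt.1 h).comp_hasDerivAt t hline

theorem ConvexOn.add_inner_gradient_le (hconv : ConvexOn ℝ univ g) (hg : Differentiable ℝ g)
    (x y : E) : g x + ⟪gradient g x, y - x⟫ ≤ g y := by
  have hline : ConvexOn ℝ univ (fun s : ℝ => g (x + s • (y - x))) := by
    have hcomp : g ∘ AffineMap.lineMap x y = fun s : ℝ => g (x + s • (y - x)) := by
      ext s
      simp [AffineMap.lineMap_apply, add_comm]
    simpa [hcomp] using hconv.comp_affineMap (AffineMap.lineMap x y)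
  have hderiv : HasDerivAt (fun s : ℝ => g (x + s • (y - x))) ⟪gradient g x, y - x⟫ 0 :=
    HasGradientAt.hasDerivAt_comp_add_smul (by simpa using (hg x).hasGradientAt)
  have := hline.le_slope_of_hasDerivAt (mem_univ 0) (mem_univ 1) one_pos hderiv
  rw [slope_def_field] at this
  simp only [zero_smul, add_zero, one_smul, add_sub_cancel, sub_zero, div_one] at this
  linarith

theorem le_add_inner_gradient_add_of_lipschitz (hg : Differentiable ℝ g)
    (hlip : ∀ a b, ‖gradient g a - gradient g b‖ ≤ L * ‖a - b‖) (x y : E) :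
    g y ≤ g x + ⟪gradient g x, y - x⟫ + L / 2 * ‖y - x‖ ^ 2 := by
  set v := y - x
  have hderiv (t : ℝ) :
      HasDerivAt (fun s : ℝ => g (x + s • v)) ⟪gradient g (x + t • v), v⟫ t :=
    (hg _).hasGradientAt.hasDerivAt_comp_add_smul
  have hbound (t : ℝ) (ht : t ∈ Ico (0 : ℝ) 1) :
      ⟪gradient g (x + t • v), v⟫ ≤ ⟪gradient g (x + (0 : ℝ) • v), v⟫ + L * ‖v‖ ^ 2 * t := by
    have hdist : ‖(x + t • v) - x‖ = t * ‖v‖ := by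
      rw [add_sub_cancel_left, norm_smul, Real.norm_of_nonneg ht.1]
    have := (real_inner_le_norm (gradient g (x + t • v) - gradient g x) v).trans
      (mul_le_mul_of_nonneg_right ((hlip _ x).trans_eq (by rw [hdist])) (norm_nonneg v))
    rw [inner_sub_left] at this
    simp only [zero_smul, add_zero]
    nlinarith
  have := le_add_deriv_add_half_of_deriv_le hderiv hbound
  simp only [zero_smul, add_zero, one_smul, add_sub_cancel, v] at this
  linarith

theorem ConvexOn.norm_gradient_sub_sq_le (hconv : ConvexOn ℝ univ g) (hg : Differentiable ℝ g)
    (hlip : ∀ a b, ‖gradient g a - gradient g b‖ ≤ L * ‖a - b‖) (x y : E) :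
    ‖gradient g x - gradient g y‖ ^ 2 ≤ 2 * L * (g x - g y - ⟪gradient g y, x - y⟫) := by
  set D := gradient g x - gradient g y
  rcases le_or_gt L 0 with hL | hL
  · have hlower := hconv.add_inner_gradient_le hg y x
    have hD : ‖D‖ = 0 :=
      le_antisymm ((hlip x y).trans (mul_nonpos_of_nonpos_of_nonneg hL (norm_nonneg _)))
        (norm_nonneg _)
    have hupper := le_add_inner_gradient_add_of_lipschitz hg hlip y x
    have hbregman : g x - g y - ⟪gradient g y, x - y⟫ = 0 := by
      nlinarith [mul_nonpos_of_nonpos_of_nonneg hL (sq_nonneg ‖x - y‖)]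
    rw [hD, hbregman]
    simp
  · set z := x - L⁻¹ • D
    have hlower := hconv.add_inner_gradient_le hg y z
    have hupper := le_add_inner_gradient_add_of_lipschitz hg hlip x z
    have hzx : z - x = -(L⁻¹ • D) := by simp [z]
    have hzy : z - y = (x - y) - L⁻¹ • D := by simp only [z]; abel
    rw [hzx, inner_neg_right, real_inner_smul_right, norm_neg, norm_smul, Real.norm_of_nonneg
      (inv_nonneg.2 hL.le)] at hupper
    rw [hzy, inner_sub_right, real_inner_smul_right] at hlower
    have hDD : L⁻¹ * ⟪gradient g x, D⟫ - L⁻¹ * ⟪gradient g y, D⟫ = L⁻¹ * ‖D‖ ^ 2 := by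
      rw [← mul_sub, ← inner_sub_left, real_inner_self_eq_norm_sq]
    have hkey : ‖D‖ ^ 2 / (2 * L) ≤ g x - g y - ⟪gradient g y, x - y⟫ := by
      have : ‖D‖ ^ 2 / (2 * L) = L⁻¹ * ‖D‖ ^ 2 - L / 2 * (L⁻¹ * ‖D‖) ^ 2 := by
        field_simp; ring
      linarith
    rwa [div_le_iff₀' (by positivity)] at hkey

end InnerProductSpace

/-- **Lemma 2 (equation (8) of Johnson & Zhang).**
If each `f_i : ℝ^d → ℝ` is convex and differentiable with `L`-Lipschitz gradient,
`f = (1/N)·Σᵢ fᵢ`, and `w*` is a global minimizer of `f`, then for every `w`,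
`(1/N)·Σᵢ ‖∇fᵢ(w) − ∇fᵢ(w*)‖² ≤ 2L(f(w) − f(w*))`; equivalently, for `i` uniform on
`{1,…,N}`, `E[‖∇fᵢ(w) − ∇fᵢ(w*)‖²] ≤ 2L(f(w) − f(w*))`. -/
theorem svrg_second_moment_lemma {d N : ℕ} (L : ℝ)
    (fi : Fin N → EuclideanSpace ℝ (Fin d) → ℝ)
    (f : EuclideanSpace ℝ (Fin d) → ℝ)
    (hconv : ∀ i, ConvexOn ℝ Set.univ (fi i))
    (hdiff : ∀ i, Differentiable ℝ (fi i))
    (hlip : ∀ i x y, ‖gradient (fi i) x - gradient (fi i) y‖ ≤ L * ‖x - y‖)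
    (hf : ∀ x, f x = (N : ℝ)⁻¹ * ∑ i, fi i x)
    (wstar : EuclideanSpace ℝ (Fin d))
    (hmin : ∀ x, f wstar ≤ f x) :
    ∀ w, (N : ℝ)⁻¹ * ∑ i, ‖gradient (fi i) w - gradient (fi i) wstar‖ ^ 2
      ≤ 2 * L * (f w - f wstar) := by
  intro w
  obtain rfl : f = fun x => (N : ℝ)⁻¹ * ∑ i, fi i x := funext hf
  have hstationary : (N : ℝ)⁻¹ * ∑ i, ⟪gradient (fi i) wstar, w - wstar⟫ = 0 := by
    have hderiv : HasDerivAt (fun s : ℝ => (N : ℝ)⁻¹ * ∑ i, fi i (wstar + s • (w - wstar)))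
        ((N : ℝ)⁻¹ * ∑ i, ⟪gradient (fi i) wstar, w - wstar⟫) 0 :=
      (HasDerivAt.fun_sum fun i _ => HasGradientAt.hasDerivAt_comp_add_smul
        (by simpa using (hdiff i wstar).hasGradientAt)).const_mul _
    exact IsLocalMin.hasDerivAt_eq_zero (.of_forall fun s => by simpa using hmin _) hderiv
  calc (N : ℝ)⁻¹ * ∑ i, ‖gradient (fi i) w - gradient (fi i) wstar‖ ^ 2
      ≤ (N : ℝ)⁻¹ * ∑ i, 2 * L * (fi i w - fi i wstar - ⟪gradient (fi i) wstar, w - wstar⟫) := by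
        gcongr with i
        exact (hconv i).norm_gradient_sub_sq_le (hdiff i) (hlip i) w wstar
    _ = 2 * L * ((N : ℝ)⁻¹ * ∑ i, fi i w - (N : ℝ)⁻¹ * ∑ i, fi i wstar)
        - 2 * L * ((N : ℝ)⁻¹ * ∑ i, ⟪gradient (fi i) wstar, w - wstar⟫) := by
        simp only [← Finset.mul_sum, Finset.sum_sub_distrib]
        ring
    _ = 2 * L * ((N : ℝ)⁻¹ * ∑ i, fi i w - (N : ℝ)⁻¹ * ∑ i, fi i wstar) := by
        rw [hstationary, mul_zero, sub_zero]
end
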